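/- Let a, b ≥ 1 and μ ≥ 1 be natural numbers with μ ≤ M (M a natural number, M ≥ 1), and let X, Y be positive semidefinite n×n real matrices. Then |X^{a/2} Y^{μ} X^{b/2}|_{M/μ} ≤ ‖X‖^{(a+b)/2 − μ/M} · (tr(X Y^{M}))^{μ/M}, where |·|_{M/μ} denotes the Schatten (M/μ)-norm and real powers of positive semidefinite matrices are taken via the functional calculus. -/

import Mathlib

open MeasureTheory ProbabilityTheory
open scoped Classical

noncomputable section

/-- The ℓ²→ℓ² operator norm of a real square matrix. -/
def opNorm {n : ℕ} (A : Matrix (Fin n) (Fin n) ℝ) : ℝ :=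
  ‖(Matrix.toEuclideanCLM (𝕜 := ℝ) A : EuclideanSpace ℝ (Fin n) →L[ℝ] EuclideanSpace ℝ (Fin n))‖

/-- The entrywise (Bochner) expectation of a random matrix. -/
def matExp {Ω : Type*} [MeasurableSpace Ω] (μ : Measure Ω) {n : ℕ}
    (X : Ω → Matrix (Fin n) (Fin n) ℝ) : Matrix (Fin n) (Fin n) ℝ :=
  Matrix.of fun i j => ∫ ω, X ω i j ∂μ

instance matMS {n : ℕ} : MeasurableSpace (Matrix (Fin n) (Fin n) ℝ) :=
  (inferInstance : MeasurableSpace (Fin n → Fin n → ℝ))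

/-- Real power of a positive semidefinite matrix via the spectral decomposition
(continuous functional calculus); junk value `A` if `A` is not positive semidefinite. -/

def psdRpow {n : ℕ} (A : Matrix (Fin n) (Fin n) ℝ) (t : ℝ) : Matrix (Fin n) (Fin n) ℝ :=
  if hA : A.PosSemidef then
    (hA.1.eigenvectorUnitary : Matrix (Fin n) (Fin n) ℝ)
      * Matrix.diagonal (fun i => (hA.1.eigenvalues i) ^ t)
      * star (hA.1.eigenvectorUnitary : Matrix (Fin n) (Fin n) ℝ)
  else A

/-- The absolute value `|M| = (Mᵀ M)^{1/2}` of a real square matrix. -/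
def matAbs {n : ℕ} (M : Matrix (Fin n) (Fin n) ℝ) : Matrix (Fin n) (Fin n) ℝ :=
  (Matrix.posSemidef_conjTranspose_mul_self M).1.eigenvectorUnitary.1
    * Matrix.diagonal (fun i => Real.sqrt ((Matrix.posSemidef_conjTranspose_mul_self M).1.eigenvalues i))
    * (star (Matrix.posSemidef_conjTranspose_mul_self M).1.eigenvectorUnitary : Matrix (Fin n) (Fin n) ℝ)

/-- The Schatten `q`-norm of a real square matrix: `(tr(|M|^q))^{1/q}`. -/
def schattenNorm {n : ℕ} (q : ℝ) (M : Matrix (Fin n) (Fin n) ℝ) : ℝ :=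
  (Matrix.trace (psdRpow (matAbs M) q)) ^ (1 / q)

end

/-!
Write `q = M / u ≥ 1`, `κ = ‖X‖` and `Z = X^{a/2} Y^u X^{b/2}`, so that `|Z|_q^q = tr (Zᴴ Z)^{q/2}`.
By Weyl's monotonicity theorem `A ↦ tr A^s` is monotone in the Loewner order, and
`X^c ≤ κ^{c-1} X` for `c ≥ 1`. Writing `Zᴴ Z = V X^a Vᴴ`, this peels `X^a` down to `X`; after
exchanging `N Nᴴ` for `Nᴴ N` (same spectrum) the same step peels `X^b`. What is left is
`tr W^q` with `W = X^{1/2} Y^u X^{1/2}`. Each eigenvalue of `W` is a quadratic form `⟨g, Y^u g⟩`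
with `‖g‖² ≤ κ`, and Jensen's inequality for the spectral measure of `Y` gives
`⟨g, Y^u g⟩^q ≤ ‖g‖^{2(q-1)} ⟨g, Y^M g⟩`; summed over an eigenbasis of `W` this is at most
`κ^{q-1} tr (X Y^M)`.
-/

open Matrix
open scoped InnerProductSpace MatrixOrder

lemma Real.sum_mul_rpow_le {ι : Type*} (s : Finset ι) {w z : ι → ℝ} (hw : ∀ i, 0 ≤ w i)
    (hz : ∀ i, 0 ≤ z i) {q : ℝ} (hq : 1 ≤ q) :
    (∑ i ∈ s, w i * z i) ^ q ≤ (∑ i ∈ s, w i) ^ (q - 1) * ∑ i ∈ s, w i * z i ^ q := by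
  have hq0 : q ≠ 0 := by positivity
  have hW : 0 ≤ ∑ i ∈ s, w i := Finset.sum_nonneg fun i _ => hw i
  have hWz : 0 ≤ ∑ i ∈ s, w i * z i ^ q :=
    Finset.sum_nonneg fun i _ => mul_nonneg (hw i) (Real.rpow_nonneg (hz i) q)
  calc (∑ i ∈ s, w i * z i) ^ q
      ≤ ((∑ i ∈ s, w i) ^ (1 - q⁻¹) * (∑ i ∈ s, w i * z i ^ q) ^ q⁻¹) ^ q :=
        Real.rpow_le_rpow (Finset.sum_nonneg fun i _ => mul_nonneg (hw i) (hz i))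
          (Real.inner_le_weight_mul_Lp_of_nonneg s hq w z hw hz) (by positivity)
    _ = (∑ i ∈ s, w i) ^ (q - 1) * ∑ i ∈ s, w i * z i ^ q := by
        rw [Real.mul_rpow (Real.rpow_nonneg hW _) (Real.rpow_nonneg hWz _), ← Real.rpow_mul hW,
          ← Real.rpow_mul hWz, inv_mul_cancel₀ hq0, Real.rpow_one, sub_mul, one_mul,
          inv_mul_cancel₀ hq0]

namespace LinearMap.IsSymmetric

variable {𝕜 E : Type*} [RCLike 𝕜] [NormedAddCommGroup E] [InnerProductSpace 𝕜 E]
  {T S : E →ₗ[𝕜] E}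

section EigenBasis

variable {ι : Type*} [Fintype ι] (hT : T.IsSymmetric) (b : OrthonormalBasis ι 𝕜 E) {μ : ι → ℝ}
  (hb : ∀ i, T (b i) = (μ i : 𝕜) • b i)
include hT hb

lemma re_inner_apply_self_eq_sum (x : E) :
    RCLike.re ⟪T x, x⟫_𝕜 = ∑ i, μ i * ‖⟪b i, x⟫_𝕜‖ ^ 2 := by
  have h : ∀ i, ⟪T x, b i⟫_𝕜 * ⟪b i, x⟫_𝕜 = ((μ i * ‖⟪b i, x⟫_𝕜‖ ^ 2 : ℝ) : 𝕜) := fun i => by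
    rw [hT x (b i), hb i, inner_smul_right, mul_assoc, ← inner_conj_symm x, RCLike.conj_mul]
    push_cast; ring
  rw [← b.sum_inner_mul_inner, Finset.sum_congr rfl fun i _ => h i, ← RCLike.ofReal_sum,
    RCLike.ofReal_re]

lemma mul_norm_sq_le_re_inner {x : E} {c : ℝ} (h : ∀ i, ⟪b i, x⟫_𝕜 ≠ 0 → c ≤ μ i) :
    c * ‖x‖ ^ 2 ≤ RCLike.re ⟪T x, x⟫_𝕜 := by
  rw [hT.re_inner_apply_self_eq_sum b hb, ← b.sum_sq_norm_inner_right, Finset.mul_sum]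
  refine Finset.sum_le_sum fun i _ => ?_
  by_cases hi : ⟪b i, x⟫_𝕜 = 0
  · simp [hi]
  · exact mul_le_mul_of_nonneg_right (h i hi) (sq_nonneg _)

lemma re_inner_le_mul_norm_sq {x : E} {c : ℝ} (h : ∀ i, ⟪b i, x⟫_𝕜 ≠ 0 → μ i ≤ c) :
    RCLike.re ⟪T x, x⟫_𝕜 ≤ c * ‖x‖ ^ 2 := by
  rw [hT.re_inner_apply_self_eq_sum b hb, ← b.sum_sq_norm_inner_right, Finset.mul_sum]
  refine Finset.sum_le_sum fun i _ => ?_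
  by_cases hi : ⟪b i, x⟫_𝕜 = 0
  · simp [hi]
  · exact mul_le_mul_of_nonneg_right (h i hi) (sq_nonneg _)

end EigenBasis

variable [FiniteDimensional 𝕜 E] {n : ℕ} (hn : Module.finrank 𝕜 E = n)

theorem eigenvalues_le_of_isPositive_sub (hT : T.IsSymmetric) (hS : S.IsSymmetric)
    (hTS : (S - T).IsPositive) (k : Fin n) : hT.eigenvalues hn k ≤ hS.eigenvalues hn k := by
  set bT := hT.eigenvectorBasis hn
  set bS := hS.eigenvectorBasis hn
  -- A nonzero `x` orthogonal to the `bT i` with `i > k` and to the `bS j` with `j < k` exists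
  -- because these are only `n - 1` linear conditions.
  let F : E →ₗ[𝕜] (Finset.Ioi k → 𝕜) × (Finset.Iio k → 𝕜) :=
    (LinearMap.pi fun i : Finset.Ioi k => innerₛₗ 𝕜 (bT i)).prod
      (LinearMap.pi fun j : Finset.Iio k => innerₛₗ 𝕜 (bS j))
  have hF : Module.finrank 𝕜 ((Finset.Ioi k → 𝕜) × (Finset.Iio k → 𝕜)) < Module.finrank 𝕜 E := by
    simp only [Module.finrank_prod, Module.finrank_fintype_fun_eq_card, Fintype.card_coe,
      Fin.card_Ioi, Fin.card_Iio, hn]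
    omega
  obtain ⟨x, hxF, hx⟩ := Submodule.exists_mem_ne_zero_of_ne_bot (F.ker_ne_bot_of_finrank_lt hF)
  have hxT : ∀ i, ⟪bT i, x⟫_𝕜 ≠ 0 → i ≤ k := fun i hi => by
    by_contra! hki
    exact hi (congrFun (congrArg Prod.fst hxF) ⟨i, Finset.mem_Ioi.mpr hki⟩)
  have hxS : ∀ j, ⟪bS j, x⟫_𝕜 ≠ 0 → k ≤ j := fun j hj => by
    by_contra! hjk
    exact hj (congrFun (congrArg Prod.snd hxF) ⟨j, Finset.mem_Iio.mpr hjk⟩)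
  have hTS' : RCLike.re ⟪T x, x⟫_𝕜 ≤ RCLike.re ⟪S x, x⟫_𝕜 := by
    have := hTS.re_inner_nonneg_left x
    rwa [LinearMap.sub_apply, inner_sub_left, map_sub, sub_nonneg] at this
  refine le_of_mul_le_mul_right ?_ (by positivity : 0 < ‖x‖ ^ 2)
  calc hT.eigenvalues hn k * ‖x‖ ^ 2 ≤ RCLike.re ⟪T x, x⟫_𝕜 :=
        hT.mul_norm_sq_le_re_inner bT (hT.apply_eigenvectorBasis hn)
          fun i hi => hT.eigenvalues_antitone hn (hxT i hi)
    _ ≤ RCLike.re ⟪S x, x⟫_𝕜 := hTS'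
    _ ≤ hS.eigenvalues hn k * ‖x‖ ^ 2 :=
        hS.re_inner_le_mul_norm_sq bS (hS.apply_eigenvectorBasis hn)
          fun j hj => hS.eigenvalues_antitone hn (hxS j hj)

end LinearMap.IsSymmetric

namespace Matrix

lemma dotProduct_conjTranspose_mulVec {ι : Type*} [Fintype ι] (G : Matrix ι ι ℝ) (v w : ι → ℝ) :
    v ⬝ᵥ Gᴴ *ᵥ w = (G *ᵥ v) ⬝ᵥ w := by
  rw [dotProduct_mulVec, conjTranspose_eq_transpose_of_trivial, vecMul_transpose]

section Hermitian

variable {ι : Type*} [Fintype ι] [DecidableEq ι] {A B : Matrix ι ι ℝ}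

lemma IsHermitian.trace_cfc (hA : A.IsHermitian) (f : ℝ → ℝ) :
    (cfc f A).trace = ∑ i, f (hA.eigenvalues i) := by
  rw [hA.cfc_eq, IsHermitian.cfc, Unitary.conjStarAlgAut_apply, trace_mul_cycle,
    Unitary.coe_star_mul_self, one_mul, trace_diagonal]
  rfl

lemma IsHermitian.sum_eigenvalues_eq_sum_eigenvalues₀ (hA : A.IsHermitian) (f : ℝ → ℝ) :
    ∑ i, f (hA.eigenvalues i) = ∑ k, f (hA.eigenvalues₀ k) :=
  Equiv.sum_comp _ (fun k => f (hA.eigenvalues₀ k))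

lemma PosSemidef.eigenvalues₀_nonneg (hA : A.PosSemidef) (k : Fin (Fintype.card ι)) :
    0 ≤ hA.1.eigenvalues₀ k := by
  simpa [IsHermitian.eigenvalues] using
    hA.eigenvalues_nonneg (Fintype.equivOfCardEq (Fintype.card_fin _) k)

lemma IsHermitian.eigenvalues₀_le (hA : A.IsHermitian) (hB : B.IsHermitian) (hAB : A ≤ B)
    (k : Fin (Fintype.card ι)) : hA.eigenvalues₀ k ≤ hB.eigenvalues₀ k :=
  LinearMap.IsSymmetric.eigenvalues_le_of_isPositive_sub _ _ _
    (by rwa [← map_sub, isPositive_toEuclideanLin_iff]) k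

lemma trace_eq_sum_dotProduct_mulVec (A : Matrix ι ι ℝ)
    (b : OrthonormalBasis ι ℝ (EuclideanSpace ℝ ι)) :
    A.trace = ∑ i, ⇑(b i) ⬝ᵥ A *ᵥ ⇑(b i) := by
  have h := LinearMap.trace_eq_sum_inner (toEuclideanLin A) b
  rw [toEuclideanLin_eq_toLin_orthonormal,
    LinearMap.trace_eq_matrix_trace ℝ (EuclideanSpace.basisFun ι ℝ).toBasis,
    LinearMap.toMatrix_toLin] at h
  rw [h]
  refine Finset.sum_congr rfl fun i _ => ?_
  rw [← toEuclideanLin_eq_toLin_orthonormal, ← coe_toEuclideanCLM_eq_toEuclideanLin]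
  exact inner_toEuclideanCLM A _ _

lemma IsHermitian.pow_mulVec_eigenvectorBasis (hA : A.IsHermitian) (k : ℕ) (i : ι) :
    A ^ k *ᵥ ⇑(hA.eigenvectorBasis i) = hA.eigenvalues i ^ k • ⇑(hA.eigenvectorBasis i) := by
  induction k with
  | zero => simp
  | succ k ih =>
    rw [pow_succ', ← mulVec_mulVec, ih, mulVec_smul, hA.mulVec_eigenvectorBasis, smul_smul,
      ← pow_succ]

lemma IsHermitian.dotProduct_pow_mulVec (hA : A.IsHermitian) (k : ℕ) (x : ι → ℝ) :
    x ⬝ᵥ A ^ k *ᵥ x = ∑ i, hA.eigenvalues i ^ k * (⇑(hA.eigenvectorBasis i) ⬝ᵥ x) ^ 2 := by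
  have hT : (toEuclideanLin (A ^ k)).IsSymmetric := isSymmetric_toEuclideanLin_iff.mpr (hA.pow k)
  have hb (i : ι) : toEuclideanLin (A ^ k) (hA.eigenvectorBasis i)
      = hA.eigenvalues i ^ k • hA.eigenvectorBasis i := by
    change WithLp.toLp 2 (A ^ k *ᵥ ⇑(hA.eigenvectorBasis i)) = _
    rw [hA.pow_mulVec_eigenvectorBasis, WithLp.toLp_smul]
  calc x ⬝ᵥ A ^ k *ᵥ x
      = RCLike.re ⟪toEuclideanLin (A ^ k) (WithLp.toLp 2 x), WithLp.toLp 2 x⟫_ℝ := by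
        rw [RCLike.re_to_real, real_inner_comm]; exact (inner_toEuclideanCLM _ _ _).symm
    _ = _ := hT.re_inner_apply_self_eq_sum hA.eigenvectorBasis
        (μ := fun i => hA.eigenvalues i ^ k) hb _
    _ = _ := by
        refine Finset.sum_congr rfl fun i _ => ?_
        rw [Real.norm_eq_abs, sq_abs, EuclideanSpace.inner_eq_star_dotProduct, dotProduct_comm]
        simp

lemma PosSemidef.dotProduct_pow_mulVec_rpow_le (hA : A.PosSemidef) (x : ι → ℝ) {u M : ℕ}
    (hu : 0 < u) (huM : u ≤ M) :
    (x ⬝ᵥ A ^ u *ᵥ x) ^ ((M : ℝ) / u) ≤ (x ⬝ᵥ x) ^ ((M : ℝ) / u - 1) * (x ⬝ᵥ A ^ M *ᵥ x) := by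
  have hq : 1 ≤ (M : ℝ) / u := (one_le_div (by positivity)).mpr (by exact_mod_cast huM)
  have hpow : ∀ i, (hA.1.eigenvalues i ^ u) ^ ((M : ℝ) / u) = hA.1.eigenvalues i ^ M :=
    fun i => by
      rw [← Real.rpow_natCast, ← Real.rpow_mul (hA.eigenvalues_nonneg i),
        mul_div_cancel₀ _ (by positivity), Real.rpow_natCast]
  have hx : x ⬝ᵥ x = ∑ i, (⇑(hA.1.eigenvectorBasis i) ⬝ᵥ x) ^ 2 := by
    simpa using hA.1.dotProduct_pow_mulVec 0 x
  have := Real.sum_mul_rpow_le Finset.univ (w := fun i => (⇑(hA.1.eigenvectorBasis i) ⬝ᵥ x) ^ 2)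
    (z := fun i => hA.1.eigenvalues i ^ u) (fun i => sq_nonneg _)
    (fun i => pow_nonneg (hA.eigenvalues_nonneg i) u) hq
  simp only [hpow] at this
  simpa only [hA.1.dotProduct_pow_mulVec, hx, mul_comm] using this

end Hermitian

variable {n : ℕ} {A B X Y : Matrix (Fin n) (Fin n) ℝ}

lemma opNorm_nonneg (A : Matrix (Fin n) (Fin n) ℝ) : 0 ≤ opNorm A := norm_nonneg _

lemma dotProduct_mulVec_le_opNorm (A : Matrix (Fin n) (Fin n) ℝ) (v : EuclideanSpace ℝ (Fin n)) :
    ⇑v ⬝ᵥ A *ᵥ ⇑v ≤ opNorm A * ‖v‖ ^ 2 := by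
  rw [← inner_toEuclideanCLM]
  calc _ ≤ ‖v‖ * ‖toEuclideanCLM (𝕜 := ℝ) A v‖ := real_inner_le_norm _ _
    _ ≤ ‖v‖ * (opNorm A * ‖v‖) := by gcongr; exact (toEuclideanCLM (𝕜 := ℝ) A).le_opNorm v
    _ = opNorm A * ‖v‖ ^ 2 := by ring

lemma IsHermitian.eigenvalues_le_opNorm (hA : A.IsHermitian) (i : Fin n) :
    hA.eigenvalues i ≤ opNorm A := by
  calc hA.eigenvalues i = ⇑(hA.eigenvectorBasis i) ⬝ᵥ A *ᵥ ⇑(hA.eigenvectorBasis i) := by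
        rw [hA.eigenvalues_eq i, RCLike.re_to_real, star_trivial]
    _ ≤ opNorm A * ‖hA.eigenvectorBasis i‖ ^ 2 := dotProduct_mulVec_le_opNorm A _
    _ = opNorm A := by rw [hA.eigenvectorBasis.orthonormal.1 i, one_pow, mul_one]

lemma PosSemidef.psdRpow_eq_cfc (hA : A.PosSemidef) (t : ℝ) :
    psdRpow A t = cfc (fun x : ℝ => x ^ t) A := by
  rw [psdRpow, dif_pos hA, hA.1.cfc_eq, IsHermitian.cfc, Unitary.conjStarAlgAut_apply]
  rfl

lemma PosSemidef.posSemidef_psdRpow (hA : A.PosSemidef) (t : ℝ) : (psdRpow A t).PosSemidef := by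
  rw [hA.psdRpow_eq_cfc]
  exact (cfc_nonneg fun x hx =>
    Real.rpow_nonneg (spectrum_nonneg_of_nonneg hA.nonneg hx) t).posSemidef

lemma PosSemidef.psdRpow_add (hA : A.PosSemidef) {t s : ℝ} (ht : 0 ≤ t) (hs : 0 ≤ s) :
    psdRpow A (t + s) = psdRpow A t * psdRpow A s := by
  rw [hA.psdRpow_eq_cfc, hA.psdRpow_eq_cfc, hA.psdRpow_eq_cfc,
    ← cfc_mul _ _ A (A.finite_real_spectrum.continuousOn _) (A.finite_real_spectrum.continuousOn _)]
  exact cfc_congr fun x hx =>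
    Real.rpow_add_of_nonneg (spectrum_nonneg_of_nonneg hA.nonneg hx) ht hs

lemma PosSemidef.psdRpow_one (hA : A.PosSemidef) : psdRpow A 1 = A := by
  rw [hA.psdRpow_eq_cfc]
  exact (cfc_congr fun x _ => Real.rpow_one x).trans (cfc_id' ℝ A)

lemma PosSemidef.psdRpow_half_mul_self (hA : A.PosSemidef) {t : ℝ} (ht : 0 ≤ t) :
    psdRpow A (t / 2) * psdRpow A (t / 2) = psdRpow A t := by
  rw [← hA.psdRpow_add (by positivity) (by positivity), add_halves]

lemma PosSemidef.psdRpow_le_smul (hA : A.PosSemidef) {c : ℝ} (hc : 1 ≤ c) :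
    psdRpow A c ≤ opNorm A ^ (c - 1) • A := by
  rw [hA.psdRpow_eq_cfc, ← cfc_const_mul_id (R := ℝ) _ A hA.1.isSelfAdjoint]
  refine cfc_mono (fun x hx => ?_) (A.finite_real_spectrum.continuousOn _)
    (A.finite_real_spectrum.continuousOn _)
  obtain ⟨i, rfl⟩ := hA.1.spectrum_real_eq_range_eigenvalues ▸ hx
  have h0 := hA.eigenvalues_nonneg i
  calc hA.1.eigenvalues i ^ c = hA.1.eigenvalues i ^ (c - 1) * hA.1.eigenvalues i := by
        conv_lhs => rw [← sub_add_cancel c 1]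
        rw [Real.rpow_add_of_nonneg h0 (by linarith) zero_le_one, Real.rpow_one]
    _ ≤ opNorm A ^ (c - 1) * hA.1.eigenvalues i := by
        gcongr
        exact hA.1.eigenvalues_le_opNorm i

lemma PosSemidef.trace_psdRpow (hA : A.PosSemidef) (s : ℝ) :
    (psdRpow A s).trace = ∑ i, hA.1.eigenvalues i ^ s := by
  rw [hA.psdRpow_eq_cfc, hA.1.trace_cfc]

lemma IsHermitian.trace_psdRpow_cfc (hA : A.IsHermitian) {f : ℝ → ℝ}
    (hf : ∀ x ∈ spectrum ℝ A, 0 ≤ f x) (s : ℝ) :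
    (psdRpow (cfc f A) s).trace = ∑ i, f (hA.eigenvalues i) ^ s := by
  rw [(cfc_nonneg hf).posSemidef.psdRpow_eq_cfc,
    ← cfc_comp _ _ A hA.isSelfAdjoint ((A.finite_real_spectrum.image f).continuousOn _)
      (A.finite_real_spectrum.continuousOn _), hA.trace_cfc]
  rfl

lemma PosSemidef.trace_psdRpow_smul (hA : A.PosSemidef) {c : ℝ} (hc : 0 ≤ c) (s : ℝ) :
    (psdRpow (c • A) s).trace = c ^ s * (psdRpow A s).trace := by
  rw [← cfc_const_mul_id c A hA.1.isSelfAdjoint, hA.1.trace_psdRpow_cfc, hA.trace_psdRpow,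
    Finset.mul_sum]
  · simp only [Real.mul_rpow hc (hA.eigenvalues_nonneg _)]
  · exact fun x hx => mul_nonneg hc (spectrum_nonneg_of_nonneg hA.nonneg hx)

lemma PosSemidef.trace_psdRpow_mul_self (hA : A.PosSemidef) (s : ℝ) :
    (psdRpow (A * A) (s / 2)).trace = (psdRpow A s).trace := by
  rw [← sq, ← cfc_pow_id (R := ℝ) A 2 hA.1.isSelfAdjoint,
    hA.1.trace_psdRpow_cfc (fun x _ => sq_nonneg x), hA.trace_psdRpow]
  refine Finset.sum_congr rfl fun i _ => ?_
  rw [← Real.rpow_natCast, ← Real.rpow_mul (hA.eigenvalues_nonneg i)]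
  ring_nf

lemma trace_psdRpow_matAbs (Z : Matrix (Fin n) (Fin n) ℝ) (s : ℝ) :
    (psdRpow (matAbs Z) s).trace = (psdRpow (Zᴴ * Z) (s / 2)).trace := by
  have hZ := posSemidef_conjTranspose_mul_self Z
  have : matAbs Z = cfc Real.sqrt (Zᴴ * Z) := by
    rw [hZ.1.cfc_eq, IsHermitian.cfc, Unitary.conjStarAlgAut_apply]; rfl
  rw [this, hZ.1.trace_psdRpow_cfc (fun x _ => Real.sqrt_nonneg x), hZ.trace_psdRpow]
  refine Finset.sum_congr rfl fun i _ => ?_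
  rw [Real.sqrt_eq_rpow, ← Real.rpow_mul (hZ.eigenvalues_nonneg i)]
  ring_nf

lemma trace_psdRpow_mul_conjTranspose (N : Matrix (Fin n) (Fin n) ℝ) (s : ℝ) :
    (psdRpow (N * Nᴴ) s).trace = (psdRpow (Nᴴ * N) s).trace := by
  have h₁ := posSemidef_self_mul_conjTranspose N
  have h₂ := posSemidef_conjTranspose_mul_self N
  rw [h₁.trace_psdRpow, h₂.trace_psdRpow,
    (h₁.1.eigenvalues_eq_eigenvalues_iff h₂.1).mpr (charpoly_mul_comm N Nᴴ)]

lemma PosSemidef.trace_psdRpow_le_of_le (hA : A.PosSemidef) (hAB : A ≤ B) {s : ℝ} (hs : 0 ≤ s) :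
    (psdRpow A s).trace ≤ (psdRpow B s).trace := by
  have hB : B.PosSemidef := (hA.nonneg.trans hAB).posSemidef
  rw [hA.trace_psdRpow, hB.trace_psdRpow, hA.1.sum_eigenvalues_eq_sum_eigenvalues₀ (· ^ s),
    hB.1.sum_eigenvalues_eq_sum_eigenvalues₀ (· ^ s)]
  gcongr with k
  · exact hA.eigenvalues₀_nonneg k
  · exact hA.1.eigenvalues₀_le hB.1 hAB k

lemma PosSemidef.trace_psdRpow_conj_le (hX : X.PosSemidef) (V : Matrix (Fin n) (Fin n) ℝ)
    {c s : ℝ} (hc : 1 ≤ c) (hs : 0 ≤ s) :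
    (psdRpow (V * psdRpow X c * Vᴴ) s).trace
      ≤ opNorm X ^ ((c - 1) * s) * (psdRpow (V * X * Vᴴ) s).trace := by
  have hκ : 0 ≤ opNorm X ^ (c - 1) := Real.rpow_nonneg (opNorm_nonneg X) _
  have hle : V * psdRpow X c * Vᴴ ≤ opNorm X ^ (c - 1) • (V * X * Vᴴ) := by
    rw [← smul_mul_assoc, ← mul_smul_comm, ← star_eq_conjTranspose]
    exact star_right_conjugate_le_conjugate (hX.psdRpow_le_smul hc) V
  calc (psdRpow (V * psdRpow X c * Vᴴ) s).trace
      ≤ (psdRpow (opNorm X ^ (c - 1) • (V * X * Vᴴ)) s).trace :=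
        ((hX.posSemidef_psdRpow c).mul_mul_conjTranspose_same V).trace_psdRpow_le_of_le hle hs
    _ = opNorm X ^ ((c - 1) * s) * (psdRpow (V * X * Vᴴ) s).trace := by
        rw [(hX.mul_mul_conjTranspose_same V).trace_psdRpow_smul hκ,
          ← Real.rpow_mul (opNorm_nonneg X)]

lemma PosSemidef.trace_psdRpow_conjTranspose_mul_pow_mul_le (hY : Y.PosSemidef)
    (G : Matrix (Fin n) (Fin n) ℝ) {u M : ℕ} (hu : 0 < u) (huM : u ≤ M) :
    (psdRpow (Gᴴ * Y ^ u * G) ((M : ℝ) / u)).trace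
      ≤ opNorm (Gᴴ * G) ^ ((M : ℝ) / u - 1) * (Gᴴ * Y ^ M * G).trace := by
  have hq : 1 ≤ (M : ℝ) / u := (one_le_div (by positivity)).mpr (by exact_mod_cast huM)
  have hW : (Gᴴ * Y ^ u * G).PosSemidef := (hY.pow u).conjTranspose_mul_mul_same G
  set b := hW.1.eigenvectorBasis
  have heig : ∀ i, hW.1.eigenvalues i = (G *ᵥ b i) ⬝ᵥ Y ^ u *ᵥ (G *ᵥ b i) := fun i => by
    rw [hW.1.eigenvalues_eq i, RCLike.re_to_real, star_trivial, ← mulVec_mulVec, ← mulVec_mulVec,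
      dotProduct_conjTranspose_mulVec]
  have hnorm : ∀ i, (G *ᵥ b i) ⬝ᵥ (G *ᵥ b i) ≤ opNorm (Gᴴ * G) := fun i => by
    have := dotProduct_mulVec_le_opNorm (Gᴴ * G) (b i)
    rwa [← mulVec_mulVec, dotProduct_conjTranspose_mulVec, b.orthonormal.1 i, one_pow,
      mul_one] at this
  have htrace : (Gᴴ * Y ^ M * G).trace = ∑ i, (G *ᵥ b i) ⬝ᵥ Y ^ M *ᵥ (G *ᵥ b i) := by
    simp only [trace_eq_sum_dotProduct_mulVec _ b, ← mulVec_mulVec, dotProduct_conjTranspose_mulVec]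
  rw [hW.trace_psdRpow, htrace, Finset.mul_sum]
  refine Finset.sum_le_sum fun i _ => ?_
  have hYM := (hY.pow M).dotProduct_mulVec_nonneg (G *ᵥ b i)
  rw [star_trivial] at hYM
  calc hW.1.eigenvalues i ^ ((M : ℝ) / u)
      ≤ ((G *ᵥ b i) ⬝ᵥ (G *ᵥ b i)) ^ ((M : ℝ) / u - 1) * ((G *ᵥ b i) ⬝ᵥ Y ^ M *ᵥ (G *ᵥ b i)) := by
        rw [heig]; exact hY.dotProduct_pow_mulVec_rpow_le _ hu huM
    _ ≤ opNorm (Gᴴ * G) ^ ((M : ℝ) / u - 1) * ((G *ᵥ b i) ⬝ᵥ Y ^ M *ᵥ (G *ᵥ b i)) :=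
        mul_le_mul_of_nonneg_right (Real.rpow_le_rpow (dotProduct_self_star_nonneg _) (hnorm i)
          (sub_nonneg.mpr hq)) hYM

lemma PosSemidef.trace_mul_pow_nonneg (hX : X.PosSemidef) (hY : Y.PosSemidef) (M : ℕ) :
    0 ≤ (X * Y ^ M).trace := by
  have hR := hX.posSemidef_psdRpow (1 / 2)
  have := ((hY.pow M).conjTranspose_mul_mul_same (psdRpow X (1 / 2))).trace_nonneg
  rwa [hR.1.eq, trace_mul_cycle, hX.psdRpow_half_mul_self zero_le_one, hX.psdRpow_one] at this

lemma PosSemidef.trace_psdRpow_sqrt_conj_pow_le (hX : X.PosSemidef) (hY : Y.PosSemidef)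
    {u M : ℕ} (hu : 0 < u) (huM : u ≤ M) :
    (psdRpow (psdRpow X (1 / 2) * Y ^ u * psdRpow X (1 / 2)) ((M : ℝ) / u)).trace
      ≤ opNorm X ^ ((M : ℝ) / u - 1) * (X * Y ^ M).trace := by
  have hR := (hX.posSemidef_psdRpow (1 / 2)).1.eq
  have hRR := hX.psdRpow_half_mul_self zero_le_one
  have := hY.trace_psdRpow_conjTranspose_mul_pow_mul_le (psdRpow X (1 / 2)) hu huM
  rwa [hR, hRR, trace_mul_cycle, hRR, hX.psdRpow_one] at this

lemma PosSemidef.trace_psdRpow_conjTranspose_mul_self_le (hX : X.PosSemidef)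
    {P : Matrix (Fin n) (Fin n) ℝ} (hP : P.PosSemidef) {a b s : ℝ} (ha : 1 ≤ a) (hb : 1 ≤ b) (hs : 0 ≤ s)
    {Z : Matrix (Fin n) (Fin n) ℝ} (hZ : Z = psdRpow X (a / 2) * P * psdRpow X (b / 2)) :
    (psdRpow (Zᴴ * Z) (s / 2)).trace
      ≤ opNorm X ^ ((a + b - 2) / 2 * s)
          * (psdRpow (psdRpow X (1 / 2) * P * psdRpow X (1 / 2)) s).trace := by
  set R := psdRpow X (1 / 2)
  have hR : R.PosSemidef := hX.posSemidef_psdRpow _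
  have hRR : R * R = X := by rw [hX.psdRpow_half_mul_self zero_le_one, hX.psdRpow_one]
  have hPa := (hX.posSemidef_psdRpow (a / 2)).1.eq
  have hPb := (hX.posSemidef_psdRpow (b / 2)).1.eq
  set V₁ := psdRpow X (b / 2) * P
  set V₂ := R * P
  have hW : (R * P * R).PosSemidef := by
    have := hP.conjTranspose_mul_mul_same R
    rwa [hR.1.eq] at this
  have hZZ : Zᴴ * Z = V₁ * psdRpow X a * V₁ᴴ := by
    simp only [hZ, V₁, conjTranspose_mul, hPa, hPb, hP.1.eq,
      ← hX.psdRpow_half_mul_self (by linarith : (0 : ℝ) ≤ a), mul_assoc]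
  have hV₁X : V₁ * X * V₁ᴴ = (V₁ * R) * (V₁ * R)ᴴ := by
    simp only [conjTranspose_mul, hR.1.eq, ← hRR, mul_assoc]
  have hV₁ : (V₁ * R)ᴴ * (V₁ * R) = V₂ * psdRpow X b * V₂ᴴ := by
    simp only [V₁, V₂, conjTranspose_mul, hR.1.eq, hPb, hP.1.eq,
      ← hX.psdRpow_half_mul_self (by linarith : (0 : ℝ) ≤ b), mul_assoc]
  have hV₂ : V₂ * X * V₂ᴴ = (R * P * R) * (R * P * R) := by
    simp only [V₂, conjTranspose_mul, hR.1.eq, hP.1.eq, ← hRR, mul_assoc]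
  calc (psdRpow (Zᴴ * Z) (s / 2)).trace
      ≤ opNorm X ^ ((a - 1) * (s / 2)) * (psdRpow (V₁ * X * V₁ᴴ) (s / 2)).trace := by
        rw [hZZ]; exact hX.trace_psdRpow_conj_le V₁ ha (by positivity)
    _ ≤ opNorm X ^ ((a - 1) * (s / 2))
          * (opNorm X ^ ((b - 1) * (s / 2)) * (psdRpow (R * P * R) s).trace) := by
        rw [hV₁X, trace_psdRpow_mul_conjTranspose, hV₁, ← hW.trace_psdRpow_mul_self, ← hV₂]
        exact mul_le_mul_of_nonneg_left (hX.trace_psdRpow_conj_le V₂ hb (by positivity))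
          (Real.rpow_nonneg (opNorm_nonneg X) _)
    _ = opNorm X ^ ((a + b - 2) / 2 * s) * (psdRpow (R * P * R) s).trace := by
        rw [← mul_assoc, ← Real.rpow_add_of_nonneg (opNorm_nonneg X) (by nlinarith) (by nlinarith)]
        ring_nf

lemma PosSemidef.trace_psdRpow_single_factor_le (hX : X.PosSemidef) (hY : Y.PosSemidef)
    {a b : ℝ} (ha : 1 ≤ a) (hb : 1 ≤ b) {u M : ℕ} (hu : 0 < u) (huM : u ≤ M)
    {Z : Matrix (Fin n) (Fin n) ℝ} (hZ : Z = psdRpow X (a / 2) * Y ^ u * psdRpow X (b / 2)) :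
    (psdRpow (Zᴴ * Z) ((M : ℝ) / u / 2)).trace
      ≤ opNorm X ^ ((a + b) / 2 * ((M : ℝ) / u) - 1) * (X * Y ^ M).trace := by
  have hq : 1 ≤ (M : ℝ) / u := (one_le_div (by positivity)).mpr (by exact_mod_cast huM)
  have hκ := opNorm_nonneg X
  calc (psdRpow (Zᴴ * Z) ((M : ℝ) / u / 2)).trace
      ≤ opNorm X ^ ((a + b - 2) / 2 * ((M : ℝ) / u))
          * (opNorm X ^ ((M : ℝ) / u - 1) * (X * Y ^ M).trace) := by
        refine (hX.trace_psdRpow_conjTranspose_mul_self_le (hY.pow u) ha hb (by positivity)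
          hZ).trans ?_
        gcongr
        exact hX.trace_psdRpow_sqrt_conj_pow_le hY hu huM
    _ = opNorm X ^ ((a + b) / 2 * ((M : ℝ) / u) - 1) * (X * Y ^ M).trace := by
        rw [← mul_assoc, ← Real.rpow_add_of_nonneg hκ (by nlinarith) (by linarith)]
        ring_nf
end Matrix

theorem schatten_norm_single_factor_le_general {n : ℕ} (a b u M : ℕ)
    (ha : 1 ≤ a) (hb : 1 ≤ b) (hu : 1 ≤ u) (huM : u ≤ M)
    (X Y : Matrix (Fin n) (Fin n) ℝ) (hX : X.PosSemidef) (hY : Y.PosSemidef) :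
    schattenNorm ((M : ℝ) / u) (psdRpow X ((a : ℝ) / 2) * Y ^ u * psdRpow X ((b : ℝ) / 2))
      ≤ opNorm X ^ (((a : ℝ) + b) / 2 - (u : ℝ) / M)
          * (Matrix.trace (X * Y ^ M)) ^ ((u : ℝ) / M) := by
  set Z := psdRpow X ((a : ℝ) / 2) * Y ^ u * psdRpow X ((b : ℝ) / 2)
  have hM : (0 : ℝ) < M := by exact_mod_cast hu.trans huM
  rw [schattenNorm, trace_psdRpow_matAbs, one_div_div]
  calc (psdRpow (Zᴴ * Z) ((M : ℝ) / u / 2)).trace ^ ((u : ℝ) / M)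
      ≤ (opNorm X ^ ((a + b) / 2 * ((M : ℝ) / u) - 1) * (X * Y ^ M).trace) ^ ((u : ℝ) / M) :=
        Real.rpow_le_rpow ((posSemidef_conjTranspose_mul_self Z).posSemidef_psdRpow _).trace_nonneg
          (hX.trace_psdRpow_single_factor_le hY (by exact_mod_cast ha) (by exact_mod_cast hb) hu
            huM rfl) (by positivity)
    _ = opNorm X ^ (((a : ℝ) + b) / 2 - (u : ℝ) / M) * (X * Y ^ M).trace ^ ((u : ℝ) / M) := by
        rw [Real.mul_rpow (Real.rpow_nonneg (opNorm_nonneg X) _) (hX.trace_mul_pow_nonneg hY M),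
          ← Real.rpow_mul (opNorm_nonneg X)]
        congr 2
        field_simp

/-- For PSD matrices `X, Y` and natural numbers `1 ≤ u ≤ M`, `a, b ≥ 1`:
`|X^{a/2} Y^{u} X^{b/2}|_{M/u} ≤ ‖X‖^{(a+b)/2 - u/M} · (tr(X Y^M))^{u/M}`. -/
theorem schatten_norm_single_factor_le {n : ℕ} (a b u M : ℕ)
    (ha : 1 ≤ a) (hb : 1 ≤ b) (hu : 1 ≤ u) (hM : 1 ≤ M) (huM : u ≤ M)
    (X Y : Matrix (Fin n) (Fin n) ℝ) (hX : X.PosSemidef) (hY : Y.PosSemidef) :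
    schattenNorm ((M : ℝ) / u) (psdRpow X ((a : ℝ) / 2) * Y ^ u * psdRpow X ((b : ℝ) / 2))
      ≤ opNorm X ^ (((a : ℝ) + b) / 2 - (u : ℝ) / M)
          * (Matrix.trace (X * Y ^ M)) ^ ((u : ℝ) / M) :=
  schatten_norm_single_factor_le_general a b u M ha hb hu huM X Y hX hY
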